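/- arXiv:1712.04047 — 3 statements merged into one kernel-verified Lean document; each statement's English description precedes it below -/
import Mathlib

section
/- Let f(x) = Hx + c be a linear Hamiltonian vector field with Hamiltonian energy E(x) = ½x^T S x + c̃^T x (H = J^{-1}S, c = J^{-1}c̃, S symmetric). Let U ∈ ℝ^{2n×2k} be symplectic and F = U†HU with U† = J_k^{-1}U^T J_n. Then the projected exponential Euler step x₊ = x + h U φ(hF) U† f(x) satisfies E(x₊) = E(x). -/
open Matrix

noncomputable def Jmat (n : ℕ) : Matrix (Fin n ⊕ Fin n) (Fin n ⊕ Fin n) ℝ :=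
  Matrix.fromBlocks 0 1 (-1) 0

attribute [local instance] Matrix.linftyOpNormedRing Matrix.linftyOpNormedAlgebra

noncomputable def expM {m : Type*} [Fintype m] [DecidableEq m] (A : Matrix m m ℝ) : Matrix m m ℝ :=
  NormedSpace.exp A

/-- `phiM A = ∫₀¹ e^{sA} ds`, the matrix version of `φ(z) = (e^z-1)/z`. -/
noncomputable def phiM {m : Type*} [Fintype m] [DecidableEq m] (A : Matrix m m ℝ) : Matrix m m ℝ :=
  ∫ s in (0:ℝ)..1, NormedSpace.exp (s • A)

/-! Put `g = U† f(x)` and `ξ = h φ(hF) g`, so that `x₊ = x + U ξ`. Since `J_k F = Uᵀ S U` and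
`J_k g = Uᵀ (S x + c̃)`, the energy splits as `E(x₊) = E(x) + η(ξ)` with
`η(ξ) = ½ ξᵀ (J_k F) ξ + (J_k g)ᵀ ξ`, the energy of the reduced system `ξ' = F ξ + g`.
Its exponential Euler step from `0` keeps `η = 0` because of the identity
`φ(A)ᵀ (J A) φ(A) = J φ(A) - φ(A)ᵀ J` for `J A` symmetric: `φ(A)ᵀ J = J φ(-A)`,
`A φ(A) = e^A - 1` and `φ(-A) e^A = φ(A)`. With `J` skew, the quadratic part of `η(ξ)` is then
`-2` times its linear part. -/

section Jmat

variable (n : ℕ)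

lemma Jmat_transpose : (Jmat n)ᵀ = -Jmat n := by
  simp [Jmat, Matrix.fromBlocks_transpose, Matrix.fromBlocks_neg]

lemma Jmat_mul_Jmat : Jmat n * Jmat n = -1 := by
  simp [Jmat, Matrix.fromBlocks_multiply, ← Matrix.fromBlocks_one, Matrix.fromBlocks_neg]

lemma Jmat_mul_inv : Jmat n * (Jmat n)⁻¹ = 1 := by
  rw [Matrix.inv_eq_right_inv (B := -Jmat n) (by rw [Matrix.mul_neg, Jmat_mul_Jmat, neg_neg]),
    Matrix.mul_neg, Jmat_mul_Jmat, neg_neg]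

lemma Jmat_mul_inv_cancel_left {α : Type*} (M : Matrix (Fin n ⊕ Fin n) α ℝ) :
    Jmat n * ((Jmat n)⁻¹ * M) = M := by
  rw [← Matrix.mul_assoc, Jmat_mul_inv, Matrix.one_mul]

lemma Jmat_mulVec_inv_mulVec (v : Fin n ⊕ Fin n → ℝ) :
    Jmat n *ᵥ ((Jmat n)⁻¹ *ᵥ v) = v := by
  rw [Matrix.mulVec_mulVec, Jmat_mul_inv, Matrix.one_mulVec]

end Jmat

section phiM

variable {m : Type*} [Fintype m] [DecidableEq m]

lemma continuous_exp_smul (A : Matrix m m ℝ) : Continuous fun s : ℝ => NormedSpace.exp (s • A) :=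
  NormedSpace.exp_continuous.comp (continuous_id.smul continuous_const)

lemma ContinuousLinearMap.map_phiM (L : Matrix m m ℝ →L[ℝ] Matrix m m ℝ) (A : Matrix m m ℝ) :
    L (phiM A) = ∫ s in (0:ℝ)..1, L (NormedSpace.exp (s • A)) :=
  (L.intervalIntegral_comp_comm ((continuous_exp_smul A).intervalIntegrable 0 1)).symm

lemma phiM_transpose (A : Matrix m m ℝ) : (phiM A)ᵀ = phiM Aᵀ :=
  calc (phiM A)ᵀ = ∫ s in (0:ℝ)..1, (NormedSpace.exp (s • A))ᵀ :=
        (Matrix.transposeLinearEquiv m m ℝ ℝ).toLinearMap.toContinuousLinearMap.map_phiM A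
    _ = phiM Aᵀ := by simp only [phiM, ← Matrix.exp_transpose, Matrix.transpose_smul]

lemma mul_phiM (B A : Matrix m m ℝ) :
    B * phiM A = ∫ s in (0:ℝ)..1, B * NormedSpace.exp (s • A) :=
  (ContinuousLinearMap.mul ℝ _ B).map_phiM A

lemma phiM_mul (A B : Matrix m m ℝ) :
    phiM A * B = ∫ s in (0:ℝ)..1, NormedSpace.exp (s • A) * B :=
  ((ContinuousLinearMap.mul ℝ _).flip B).map_phiM A

lemma semiconjBy_phiM {K X Y : Matrix m m ℝ} (h : SemiconjBy K X Y) :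
    SemiconjBy K (phiM X) (phiM Y) := by
  have hexp (s : ℝ) : SemiconjBy K (NormedSpace.exp (s • X)) (NormedSpace.exp (s • Y)) :=
    (h.smul_right s).exp_right
  rw [SemiconjBy, mul_phiM, phiM_mul]
  simp only [(hexp _).eq]

lemma mul_phiM_self (A : Matrix m m ℝ) : A * phiM A = NormedSpace.exp A - 1 := by
  rw [mul_phiM]
  refine (intervalIntegral.integral_eq_sub_of_hasDerivAt
    (f := fun s : ℝ => NormedSpace.exp (s • A))
    (fun s _ => hasDerivAt_exp_smul_const' (𝕂 := ℝ) A s)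
    ((continuous_const.mul (continuous_exp_smul A)).intervalIntegrable 0 1)).trans ?_
  simp

lemma phiM_neg_mul_exp (A : Matrix m m ℝ) : phiM (-A) * NormedSpace.exp A = phiM A := by
  have hshift (s : ℝ) :
      NormedSpace.exp (s • -A) * NormedSpace.exp A = NormedSpace.exp ((1 - s) • A) := by
    rw [smul_neg, ← Matrix.exp_add_of_commute _ _ ((Commute.refl A).smul_left s).neg_left]
    congr 1
    module
  simp only [phiM_mul, hshift]
  rw [intervalIntegral.integral_comp_sub_left (fun s => NormedSpace.exp (s • A))]
  norm_num [phiM]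

lemma phiM_transpose_mul_mul_phiM {K A : Matrix m m ℝ} (hK : Kᵀ = -K) (hA : (K * A)ᵀ = K * A) :
    (phiM A)ᵀ * (K * A) * phiM A = K * phiM A - (phiM A)ᵀ * K := by
  have hsemi : SemiconjBy K (-A) Aᵀ := by
    rw [Matrix.transpose_mul, hK, Matrix.mul_neg] at hA
    rw [SemiconjBy, Matrix.mul_neg, ← hA, neg_neg]
  have hT : (phiM A)ᵀ * K = K * phiM (-A) := by
    rw [phiM_transpose, (semiconjBy_phiM hsemi).eq]
  calc (phiM A)ᵀ * (K * A) * phiM A = (phiM A)ᵀ * K * (A * phiM A) := by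
        simp only [Matrix.mul_assoc]
    _ = K * (phiM (-A) * NormedSpace.exp A) - K * phiM (-A) := by
        rw [hT, mul_phiM_self]; noncomm_ring
    _ = K * phiM A - (phiM A)ᵀ * K := by rw [phiM_neg_mul_exp, hT]

end phiM

section quadEnergy

variable {p q : Type*} [Fintype p] [Fintype q]

noncomputable def quadEnergy (G : Matrix p p ℝ) (b x : p → ℝ) : ℝ :=
  1 / 2 * (x ⬝ᵥ G *ᵥ x) + b ⬝ᵥ x

lemma mulVec_dotProduct_mulVec_mulVec (M : Matrix p q ℝ) (B : Matrix p p ℝ) (u : q → ℝ) :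
    M *ᵥ u ⬝ᵥ B *ᵥ (M *ᵥ u) = u ⬝ᵥ (Mᵀ * B * M) *ᵥ u := by
  rw [← Matrix.mulVec_mulVec, ← Matrix.mulVec_mulVec, Matrix.dotProduct_mulVec u,
    Matrix.vecMul_transpose]

lemma dotProduct_mulVec_of_transpose_eq_neg {K : Matrix p p ℝ} (hK : Kᵀ = -K) (u w : p → ℝ) :
    u ⬝ᵥ K *ᵥ w = -(K *ᵥ u ⬝ᵥ w) := by
  rw [Matrix.dotProduct_mulVec, ← Matrix.mulVec_transpose, hK, Matrix.neg_mulVec, neg_dotProduct]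

lemma quadEnergy_add {G : Matrix p p ℝ} (hG : Gᵀ = G) (b x v : p → ℝ) :
    quadEnergy G b (x + v) = quadEnergy G b x + quadEnergy G (G *ᵥ x + b) v := by
  have hcross : x ⬝ᵥ G *ᵥ v = G *ᵥ x ⬝ᵥ v := by
    rw [Matrix.dotProduct_mulVec, ← Matrix.mulVec_transpose, hG]
  simp only [quadEnergy, Matrix.mulVec_add, dotProduct_add, add_dotProduct, hcross,
    dotProduct_comm v (G *ᵥ x)]
  ring

lemma quadEnergy_mulVec (G : Matrix p p ℝ) (b : p → ℝ) (U : Matrix p q ℝ) (ξ : q → ℝ) :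
    quadEnergy G b (U *ᵥ ξ) = quadEnergy (Uᵀ * G * U) (Uᵀ *ᵥ b) ξ := by
  rw [quadEnergy, quadEnergy, mulVec_dotProduct_mulVec_mulVec, Matrix.dotProduct_mulVec b,
    ← Matrix.mulVec_transpose]

end quadEnergy

lemma quadEnergy_smul_phiM_mulVec {m : Type*} [Fintype m] [DecidableEq m] {K A : Matrix m m ℝ}
    (hK : Kᵀ = -K) (hA : (K * A)ᵀ = K * A) (h : ℝ) (g : m → ℝ) :
    quadEnergy (K * A) (K *ᵥ g) (h • (phiM (h • A) *ᵥ g)) = 0 := by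
  set P := phiM (h • A)
  have hhA : (K * (h • A))ᵀ = K * (h • A) := by
    rw [Matrix.mul_smul, Matrix.transpose_smul, hA]
  have hquad : P *ᵥ g ⬝ᵥ (K * (h • A)) *ᵥ (P *ᵥ g) = -2 * (K *ᵥ g ⬝ᵥ P *ᵥ g) := by
    rw [mulVec_dotProduct_mulVec_mulVec, phiM_transpose_mul_mul_phiM hK hhA, Matrix.sub_mulVec,
      dotProduct_sub, ← Matrix.mulVec_mulVec, ← Matrix.mulVec_mulVec,
      dotProduct_mulVec_of_transpose_eq_neg hK, Matrix.dotProduct_mulVec g Pᵀ,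
      Matrix.vecMul_transpose, dotProduct_comm (P *ᵥ g)]
    ring
  rw [Matrix.mul_smul, Matrix.smul_mulVec] at hquad
  simp only [quadEnergy, Matrix.mulVec_smul, dotProduct_smul, smul_dotProduct, smul_eq_mul]
    at hquad ⊢
  linear_combination (1 / 2 * h) * hquad

theorem stmt11_general (n k : ℕ) (S : Matrix (Fin n ⊕ Fin n) (Fin n ⊕ Fin n) ℝ) (hS : Sᵀ = S)
    (ctilde : (Fin n ⊕ Fin n) → ℝ)
    (H : Matrix (Fin n ⊕ Fin n) (Fin n ⊕ Fin n) ℝ) (hH : H = (Jmat n)⁻¹ * S)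
    (c : (Fin n ⊕ Fin n) → ℝ) (hc : c = (Jmat n)⁻¹.mulVec ctilde)
    (E : ((Fin n ⊕ Fin n) → ℝ) → ℝ)
    (hE : ∀ x, E x = (1/2) * (x ⬝ᵥ S.mulVec x) + ctilde ⬝ᵥ x)
    (f : ((Fin n ⊕ Fin n) → ℝ) → ((Fin n ⊕ Fin n) → ℝ))
    (hf : ∀ x, f x = H.mulVec x + c)
    (U : Matrix (Fin n ⊕ Fin n) (Fin k ⊕ Fin k) ℝ)
    (Udag : Matrix (Fin k ⊕ Fin k) (Fin n ⊕ Fin n) ℝ) (hUdag : Udag = (Jmat k)⁻¹ * Uᵀ * Jmat n)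
    (F : Matrix (Fin k ⊕ Fin k) (Fin k ⊕ Fin k) ℝ) (hF : F = Udag * H * U)
    (h : ℝ) (x xp : (Fin n ⊕ Fin n) → ℝ)
    (hxp : xp = x + h • U.mulVec ((phiM (h • F)).mulVec (Udag.mulVec (f x)))) :
    E xp = E x := by
  have hJf : Jmat n *ᵥ f x = S *ᵥ x + ctilde := by
    rw [hf, hH, hc, Matrix.mulVec_add, ← Matrix.mulVec_mulVec, Jmat_mulVec_inv_mulVec,
      Jmat_mulVec_inv_mulVec]
  have hJg : Jmat k *ᵥ (Udag *ᵥ f x) = Uᵀ *ᵥ (S *ᵥ x + ctilde) := by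
    rw [hUdag, Matrix.mul_assoc, ← Matrix.mulVec_mulVec, Jmat_mulVec_inv_mulVec,
      ← Matrix.mulVec_mulVec, hJf]
  have hJF : Jmat k * F = Uᵀ * S * U := by
    simp only [hF, hUdag, hH, Matrix.mul_assoc, Jmat_mul_inv_cancel_left]
  have hJF_symm : (Jmat k * F)ᵀ = Jmat k * F := by
    rw [hJF, Matrix.transpose_mul, Matrix.transpose_mul, Matrix.transpose_transpose, hS,
      Matrix.mul_assoc]
  obtain rfl : E = quadEnergy S ctilde := funext hE
  rw [hxp, ← Matrix.mulVec_smul, quadEnergy_add hS, quadEnergy_mulVec, ← hJF, ← hJg,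
    quadEnergy_smul_phiM_mulVec (Jmat_transpose k) hJF_symm, add_zero]

theorem stmt11 (n k : ℕ) (S : Matrix (Fin n ⊕ Fin n) (Fin n ⊕ Fin n) ℝ) (hS : Sᵀ = S)
    (ctilde : (Fin n ⊕ Fin n) → ℝ)
    (H : Matrix (Fin n ⊕ Fin n) (Fin n ⊕ Fin n) ℝ) (hH : H = (Jmat n)⁻¹ * S)
    (c : (Fin n ⊕ Fin n) → ℝ) (hc : c = (Jmat n)⁻¹.mulVec ctilde)
    (E : ((Fin n ⊕ Fin n) → ℝ) → ℝ)
    (hE : ∀ x, E x = (1/2) * (x ⬝ᵥ S.mulVec x) + ctilde ⬝ᵥ x)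
    (f : ((Fin n ⊕ Fin n) → ℝ) → ((Fin n ⊕ Fin n) → ℝ))
    (hf : ∀ x, f x = H.mulVec x + c)
    (U : Matrix (Fin n ⊕ Fin n) (Fin k ⊕ Fin k) ℝ) (hU : Uᵀ * Jmat n * U = Jmat k)
    (Udag : Matrix (Fin k ⊕ Fin k) (Fin n ⊕ Fin n) ℝ) (hUdag : Udag = (Jmat k)⁻¹ * Uᵀ * Jmat n)
    (F : Matrix (Fin k ⊕ Fin k) (Fin k ⊕ Fin k) ℝ) (hF : F = Udag * H * U)
    (h : ℝ) (x xp : (Fin n ⊕ Fin n) → ℝ)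
    (hxp : xp = x + h • U.mulVec ((phiM (h • F)).mulVec (Udag.mulVec (f x)))) :
    E xp = E x :=
  stmt11_general n k S hS ctilde H hH c hc E hE f hf U Udag hUdag F hF h x xp hxp
end

section
/- Let f(x) = Hx + c and define the explicit exponential midpoint step x₊ = x + e^{hH}(x₋ − x) + 2hφ(hH)f(x). Then ½(x₊ + x) = e^{hH}·½(x + x₋) + hφ(hH)c; i.e., the averages ½(x₊+x) propagate by the exact flow of x' = Hx + c over time h. -/
/-!
Since `h φ(hH) H = e^{hH} - I`, the term `2h φ(hH) H x` in the step equals `2(e^{hH} - I) x`, so the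
step reads `x₊ + x = e^{hH} (x + x₋) + 2h φ(hH) c`; halving gives the claim.
-/

open Matrix

attribute [local instance] Matrix.linftyOpNormedRing Matrix.linftyOpNormedAlgebra

lemma phiM_mul_self {m : Type*} [Fintype m] [DecidableEq m] (A : Matrix m m ℝ) :
    phiM A * A = expM A - 1 := by
  have hcont : Continuous fun s : ℝ => NormedSpace.exp (s • A) :=
    NormedSpace.exp_continuous.comp (continuous_id.smul continuous_const)
  calc phiM A * A = ∫ s in (0:ℝ)..1, NormedSpace.exp (s • A) * A :=
        (ContinuousLinearMap.intervalIntegral_comp_comm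
          ((ContinuousLinearMap.mul ℝ (Matrix m m ℝ)).flip A) (hcont.intervalIntegrable 0 1)).symm
    _ = NormedSpace.exp ((1:ℝ) • A) - NormedSpace.exp ((0:ℝ) • A) :=
        intervalIntegral.integral_eq_sub_of_hasDerivAt (fun s _ => hasDerivAt_exp_smul_const A s)
          ((hcont.mul continuous_const).intervalIntegrable _ _)
    _ = expM A - 1 := by rw [one_smul, zero_smul, NormedSpace.exp_zero, expM]

lemma smul_phiM_mulVec_mulVec {m : Type*} [Fintype m] [DecidableEq m] (h : ℝ)
    (H : Matrix m m ℝ) (v : m → ℝ) :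
    h • (phiM (h • H)).mulVec (H.mulVec v) = (expM (h • H)).mulVec v - v := by
  rw [← mulVec_smul, ← smul_mulVec, mulVec_mulVec, phiM_mul_self, sub_mulVec, one_mulVec]

theorem stmt12 (m : ℕ) (H : Matrix (Fin m) (Fin m) ℝ) (c : Fin m → ℝ)
    (f : (Fin m → ℝ) → (Fin m → ℝ)) (hf : ∀ x, f x = H.mulVec x + c)
    (h : ℝ) (x xm xp : Fin m → ℝ)
    (hxp : xp = x + (expM (h • H)).mulVec (xm - x) + (2 * h) • (phiM (h • H)).mulVec (f x)) :
    (1/2 : ℝ) • (xp + x)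
      = (expM (h • H)).mulVec ((1/2 : ℝ) • (x + xm)) + h • (phiM (h • H)).mulVec c := by
  subst hxp
  rw [hf]
  simp only [mulVec_add, mulVec_smul, smul_add, mulVec_sub]
  linear_combination (norm := module) smul_phiM_mulVec_mulVec h H x
end

section
/- Assume U ∈ ℝ^{2n×2k} has full rank with left inverse U† and x₋ − x ∈ Range(U). If x₊ = x + U e^{hF} U†(x₋ − x) + 2h U φ(hF) U† f(x), then x₋ = x + U e^{−hF} U†(x₊ − x) − 2h U φ(−hF) U† f(x); i.e., the approximate explicit exponential midpoint rule is time-symmetric. -/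
open Matrix

attribute [local instance] Matrix.linftyOpNormedRing Matrix.linftyOpNormedAlgebra

/-!
Write `x₊ - x = U w` with `w = e^{hF} U†(x₋ - x) + 2h φ(hF) U† f(x)`. Since `U†U = 1`, the reverse
step only sees `U† (x₊ - x) = w`, and multiplying `w` by `e^{-hF}` gives
`U†(x₋ - x) + 2h φ(-hF) U† f(x)` by `e^{-hF} e^{hF} = 1` and `e^{-hF} φ(hF) = φ(-hF)`.
Applying `U` recovers `x₋ - x` because `x₋ - x` lies in the range of `U`.
-/

section ReverseStep

variable {R m l : Type*} [CommRing R] [Fintype m] [Fintype l] [DecidableEq l]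

theorem eq_add_mulVec_sub_of_eq_add_mulVec {U : Matrix m l R} {Udag : Matrix l m R}
    (hleft : Udag * U = 1) {E E' P P' : Matrix l l R} (hE : E' * E = 1) (hP : E' * P = P')
    (c : R) {x xm xp g : m → R} (hrange : ∃ ζ, xm - x = U *ᵥ ζ)
    (hxp : xp = x + U *ᵥ (E *ᵥ (Udag *ᵥ (xm - x))) + c • U *ᵥ (P *ᵥ (Udag *ᵥ g))) :
    xm = x + U *ᵥ (E' *ᵥ (Udag *ᵥ (xp - x))) - c • U *ᵥ (P' *ᵥ (Udag *ᵥ g)) := by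
  obtain ⟨ζ, hζ⟩ := hrange
  have hUdag_U : ∀ v, Udag *ᵥ (U *ᵥ v) = v := fun v => by
    rw [mulVec_mulVec, hleft, one_mulVec]
  have hxp_sub : xp - x = U *ᵥ (E *ᵥ (Udag *ᵥ (xm - x)) + c • P *ᵥ (Udag *ᵥ g)) := by
    rw [hxp, mulVec_add, mulVec_smul]
    abel
  have hw : Udag *ᵥ (xp - x) = E *ᵥ (Udag *ᵥ (xm - x)) + c • P *ᵥ (Udag *ᵥ g) := by
    rw [hxp_sub, hUdag_U]
  have hE'w : E' *ᵥ (Udag *ᵥ (xp - x)) = Udag *ᵥ (xm - x) + c • P' *ᵥ (Udag *ᵥ g) := by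
    rw [hw, mulVec_add, mulVec_smul, mulVec_mulVec, hE, one_mulVec, mulVec_mulVec, hP]
  have hUUdag : U *ᵥ (Udag *ᵥ (xm - x)) = xm - x := by rw [hζ, hUdag_U]
  rw [hE'w, mulVec_add, mulVec_smul, hUUdag]
  abel

end ReverseStep

section Exponential

variable {m : Type*} [Fintype m] [DecidableEq m]

theorem expM_neg_mul_expM (A : Matrix m m ℝ) : expM (-A) * expM A = 1 := by
  rw [expM, expM, ← Matrix.exp_add_of_commute _ _ (Commute.refl A).neg_left, neg_add_cancel,
    NormedSpace.exp_zero]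

theorem expM_neg_mul_phiM (A : Matrix m m ℝ) : expM (-A) * phiM A = phiM (-A) := by
  have hshift : ∀ s : ℝ, NormedSpace.exp (-A) * NormedSpace.exp (s • A)
      = NormedSpace.exp ((1 - s) • -A) := fun s => by
    rw [← Matrix.exp_add_of_commute _ _ ((Commute.refl A).smul_right s).neg_left]
    congr 1
    module
  calc expM (-A) * phiM A
      = ∫ s in (0:ℝ)..1, NormedSpace.exp (-A) * NormedSpace.exp (s • A) :=
        ((ContinuousLinearMap.mul ℝ _ (NormedSpace.exp (-A))).intervalIntegral_comp_comm
          ((NormedSpace.exp_continuous.comp (continuous_id.smul continuous_const)).intervalIntegrable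
            _ _)).symm
    _ = ∫ s in (0:ℝ)..1, NormedSpace.exp ((1 - s) • -A) := by simp_rw [hshift]
    _ = phiM (-A) := by
        rw [intervalIntegral.integral_comp_sub_left (fun u : ℝ => NormedSpace.exp (u • -A)),
          sub_self, sub_zero, phiM]

end Exponential

theorem stmt14 (n k : ℕ)
    (U : Matrix (Fin n ⊕ Fin n) (Fin k ⊕ Fin k) ℝ)
    (Udag : Matrix (Fin k ⊕ Fin k) (Fin n ⊕ Fin n) ℝ) (hleft : Udag * U = 1)
    (F : Matrix (Fin k ⊕ Fin k) (Fin k ⊕ Fin k) ℝ)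
    (f : ((Fin n ⊕ Fin n) → ℝ) → ((Fin n ⊕ Fin n) → ℝ))
    (h : ℝ) (x xm xp : (Fin n ⊕ Fin n) → ℝ)
    (hrange : ∃ ζ, xm - x = U.mulVec ζ)
    (hxp : xp = x + U.mulVec ((expM (h • F)).mulVec (Udag.mulVec (xm - x)))
      + (2 * h) • U.mulVec ((phiM (h • F)).mulVec (Udag.mulVec (f x)))) :
    xm = x + U.mulVec ((expM ((-h) • F)).mulVec (Udag.mulVec (xp - x)))
      - (2 * h) • U.mulVec ((phiM ((-h) • F)).mulVec (Udag.mulVec (f x))) := by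
  rw [neg_smul]
  exact eq_add_mulVec_sub_of_eq_add_mulVec hleft (expM_neg_mul_expM _) (expM_neg_mul_phiM _)
    (2 * h) hrange hxp
end
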